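/- arXiv:2306.01341 — 2 statements merged into one kernel-verified Lean document; each statement's English description precedes it below -/
import Mathlib

section
/- Let G be a finite graph on vertex set V, let k and τ ≥ 1 be positive integers, and let 𝒞(G) be a nonempty set of colourings σ : V → [k]. For σ ∈ 𝒞(G) and a vertex v, let L_σ(v) be the set of colours x ∈ [k] such that the colouring obtained from σ by changing the colour of v to x still belongs to 𝒞(G). Let σ be drawn uniformly at random from 𝒞(G). Let X ⊆ V, and let M ⊆ X be a subset of size m. Suppose that |L_σ(v)| ≥ τ for every σ ∈ 𝒞(G) and every v ∈ M. Then for every map σ₀ : V ∖ M → [k] that occurs as the restriction of some element of 𝒞(G) to V ∖ M, the conditional probability that X has no odd colour in σ, given that the restriction of σ to V ∖ M equals σ₀, is at most √2 · (2m/(e·τ))^{m/2}. -/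
open Finset

/-- The set of colours that occur an odd number of times on `X` under `σ`. -/
def oddColorsOn {V : Type*} {k : ℕ} (X : Finset V) (σ : V → Fin k) : Finset (Fin k) :=
  Finset.univ.filter fun c => Odd ((X.filter fun v => σ v = c).card)

/-- `σ` is a proper colouring of the simple graph `G`. -/
def IsProperColoring {V : Type*} {k : ℕ} (G : SimpleGraph V) (σ : V → Fin k) : Prop :=
  ∀ u v, G.Adj u v → σ u ≠ σ v

/-- An odd colouring of a graph: proper, and every vertex with a neighbour has a colour
occurring an odd number of times on its open neighbourhood. -/
def IsOddColoring {V : Type*} [Fintype V] {k : ℕ} (G : SimpleGraph V) [DecidableRel G.Adj]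
    (σ : V → Fin k) : Prop :=
  IsProperColoring G σ ∧
    ∀ v : V, (G.neighborFinset v).Nonempty → (oddColorsOn (G.neighborFinset v) σ).Nonempty

/-- The odd chromatic number of a graph. -/
noncomputable def oddChromNum {V : Type*} [Fintype V] (G : SimpleGraph V)
    [DecidableRel G.Adj] : ℕ :=
  sInf {k | ∃ σ : V → Fin k, IsOddColoring G σ}

/-- An `h`-odd colouring: proper, and every vertex with a neighbour has at least
`min h (deg v)` colours occurring an odd number of times on its neighbourhood. -/
def IsHOddColoring {V : Type*} [Fintype V] {k : ℕ} (h : ℕ) (G : SimpleGraph V)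
    [DecidableRel G.Adj] (σ : V → Fin k) : Prop :=
  IsProperColoring G σ ∧
    ∀ v : V, (G.neighborFinset v).Nonempty →
      min h (G.degree v) ≤ (oddColorsOn (G.neighborFinset v) σ).card

/-- The `h`-odd chromatic number of a graph. -/
noncomputable def hOddChromNum {V : Type*} [Fintype V] (h : ℕ) (G : SimpleGraph V)
    [DecidableRel G.Adj] : ℕ :=
  sInf {k | ∃ σ : V → Fin k, IsHOddColoring h G σ}

/-- The chromatic number of a graph, as a natural number. -/
noncomputable def chrom {V : Type*} (G : SimpleGraph V) : ℕ := sInf {n | G.Colorable n}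

/-- `Δ(H)`: maximum over vertices of the number of hyperedges containing it. -/
def hypDeg {V : Type*} [Fintype V] [DecidableEq V] (H : Finset (Finset V)) : ℕ :=
  Finset.univ.sup fun v => (H.filter fun e => v ∈ e).card

/-- `ε(H)`: minimum size of a hyperedge. -/
noncomputable def hypMinEdge {V : Type*} (H : Finset (Finset V)) : ℕ :=
  sInf {n | ∃ e ∈ H, e.card = n}

/-- An odd colouring of a graph-hypergraph pair: a proper colouring of `G` such that every
hyperedge has a colour occurring an odd number of times on it. -/
def IsOddColoringPair {V : Type*} {k : ℕ} (G : SimpleGraph V) (H : Finset (Finset V))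
    (σ : V → Fin k) : Prop :=
  IsProperColoring G σ ∧ ∀ e ∈ H, (oddColorsOn e σ).Nonempty

/-- An `h`-odd colouring of a graph-hypergraph pair: a proper colouring of `G` such that every
hyperedge `e` has at least `min h |e|` colours occurring an odd number of times on it. -/
def IsHOddColoringPair {V : Type*} {k : ℕ} (h : ℕ) (G : SimpleGraph V) (H : Finset (Finset V))
    (σ : V → Fin k) : Prop :=
  IsProperColoring G σ ∧ ∀ e ∈ H, min h e.card ≤ (oddColorsOn e σ).card

/-- The maximum degree of the subgraph of `G` induced on `S`. -/
def inducedMaxDegree {V : Type*} [Fintype V] [DecidableEq V] (G : SimpleGraph V)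
    [DecidableRel G.Adj] (S : Finset V) : ℕ :=
  S.sup fun v => (G.neighborFinset v ∩ S).card

/-!
Condition on the colouring outside `M`. If `X` has no odd colour under `σ`, then the colours odd
on `M` are exactly the set `O` of colours odd for `σ₀` on `X \ M`, so `M` splits into one vertex
of each colour of `O` and `q` monochromatic pairs, with `m = 2q + |O|`. Record such a split as a
bijection `ℓ` from a fixed index set onto `M`; there are `m!` of them, and each bad `σ` admits at
least `2^q q!` (swap within pairs, permute pairs). Freely recolouring one vertex of each pair and
the odd-colour vertices yields at least `τ^(q+|O|)` colourings `ρ` in the conditional space,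
while `ρ` and `ℓ` together determine `σ`, because the kept vertex of each pair still shows the
pair's colour. Double counting gives a conditional probability of at most
`m! / (2^q q! τ^(q+|O|))`, and an elementary Stirling-type induction bounds this by
`√2 (2m/(eτ))^(q+|O|) ≤ √2 (2m/(eτ))^(m/2)` once `2m/(eτ) < 1`.
-/

open scoped Nat

section Parity

variable {V : Type*} {k : ℕ}

lemma oddColorsOn_union_of_disjoint [DecidableEq V] {A B : Finset V} (h : Disjoint A B)
    (σ : V → Fin k) :
    oddColorsOn (A ∪ B) σ = symmDiff (oddColorsOn A σ) (oddColorsOn B σ) := by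
  ext c
  simp only [oddColorsOn, mem_symmDiff, mem_filter, mem_univ, true_and, filter_union,
    card_union_of_disjoint (disjoint_filter_filter h), Nat.odd_add, ← Nat.not_odd_iff_even]
  tauto

lemma oddColorsOn_congr {X : Finset V} {σ σ' : V → Fin k} (h : ∀ v ∈ X, σ v = σ' v) :
    oddColorsOn X σ = oddColorsOn X σ' := by
  ext c
  simp only [oddColorsOn, mem_filter, mem_univ, true_and]
  rw [filter_congr fun v hv => by rw [h v hv]]

lemma oddColorsOn_eq_of_oddColorsOn_eq_empty [DecidableEq V] {X M : Finset V} (hMX : M ⊆ X)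
    {σ σ₀ : V → Fin k} (hσ : ∀ v ∉ M, σ v = σ₀ v) (h : oddColorsOn X σ = ∅) :
    oddColorsOn M σ = oddColorsOn (X \ M) σ₀ := by
  have hsplit := oddColorsOn_union_of_disjoint (disjoint_sdiff (s := M) (t := X)) σ
  rw [union_sdiff_of_subset hMX, h, eq_comm, ← bot_eq_empty, symmDiff_eq_bot] at hsplit
  exact hsplit.trans (oddColorsOn_congr fun v hv => hσ v (mem_sdiff.1 hv).2)

end Parity

/-- `inl (j, b)` indexes the two vertices of the `j`-th monochromatic pair, `inr r` the vertex
carrying the `r`-th odd colour. -/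
abbrev PairingIndex (q P : ℕ) := Fin q × Bool ⊕ Fin P

section Pairing

variable {V α : Type*} {k q P : ℕ} {M : Finset V}

def IsPairing (σ : V → α) (e : Fin P → α) (ℓ : PairingIndex q P ≃ M) : Prop :=
  (∀ j b, σ (ℓ (.inl (j, b))) = σ (ℓ (.inl (j, true)))) ∧ ∀ r, σ (ℓ (.inr r)) = e r

lemma card_eq_two_mul_add (ℓ : PairingIndex q P ≃ M) : #M = 2 * q + P := by
  have := Fintype.card_congr ℓ
  simp only [Fintype.card_sum, Fintype.card_prod, Fintype.card_fin, Fintype.card_bool,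
    Fintype.card_coe] at this
  omega

/-- Each colour class of `M` is cut into pairs, plus one vertex if its size is odd. -/
lemma exists_isPairing [DecidableEq V] (σ : V → Fin k) (M : Finset V) {O : Finset (Fin k)}
    (hO : oddColorsOn M σ = O) :
    ∃ ℓ : PairingIndex ((#M - #O) / 2) #O ≃ M, IsPairing σ (fun r => O.equivFin.symm r) ℓ := by
  subst hO
  let n : Fin k → ℕ := fun c => #(M.filter (σ · = c))
  have hfibre : ∀ c,
      Fin (n c / 2) × Bool ⊕ PLift (c ∈ oddColorsOn M σ) ≃ {x : M // σ x = c} := by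
    intro c
    apply Fintype.equivOfCardEq
    have hcard : Fintype.card {x : M // σ x = c} = n c := by
      rw [Fintype.card_subtype, ← card_map (Function.Embedding.subtype _)]
      congr 1
      ext v
      simp [and_comm]
    rw [hcard, Fintype.card_sum, Fintype.card_prod, Fintype.card_fin, Fintype.card_bool]
    by_cases hodd : c ∈ oddColorsOn M σ
    · have : n c % 2 = 1 := Nat.odd_iff.1 (by simpa [oddColorsOn] using hodd)
      simp only [hodd, Fintype.card_unique]
      omega
    · have : n c % 2 = 0 := Nat.even_iff.1 (by simpa [oddColorsOn] using hodd)
      simp only [hodd, Fintype.card_ofIsEmpty]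
      omega
  let ℓ : PairingIndex (Fintype.card (Σ c, Fin (n c / 2))) #(oddColorsOn M σ) ≃ M :=
    (Equiv.sumCongr (((Fintype.equivFin _).symm.prodCongr (Equiv.refl Bool)).trans
      (Equiv.sigmaProdDistrib _ _))
      ((oddColorsOn M σ).equivFin.symm.trans (Equiv.sigmaPLiftEquivSubtype _).symm)).trans <|
      (Equiv.sigmaSumDistrib _ _).symm.trans <|
      (Equiv.sigmaCongrRight hfibre).trans (Equiv.sigmaFiberEquiv fun x : M => σ x)
  have hcol : ∀ c z, σ (hfibre c z : V) = c := fun c z => (hfibre c z).2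
  have hℓ : IsPairing σ (fun r => (oddColorsOn M σ).equivFin.symm r) ℓ :=
    ⟨fun _ _ => (hcol _ _).trans (hcol _ _).symm, fun _ => hcol _ _⟩
  have hq : Fintype.card (Σ c, Fin (n c / 2)) = (#M - #(oddColorsOn M σ)) / 2 := by
    have := card_eq_two_mul_add ℓ
    omega
  exact hq ▸ ⟨ℓ, hℓ⟩

instance [DecidableEq α] (σ : V → α) (e : Fin P → α) (ℓ : PairingIndex q P ≃ M) :
    Decidable (IsPairing σ e ℓ) := by
  unfold IsPairing; infer_instance

def pairingSymm (b : Fin q → Bool) (π : Equiv.Perm (Fin q)) : Equiv.Perm (PairingIndex q P) :=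
  Equiv.sumCongr (Equiv.prodShear π fun j => if b j then Equiv.boolNot else Equiv.refl Bool)
    (Equiv.refl _)

lemma pairingSymm_injective :
    Function.Injective fun p : (Fin q → Bool) × Equiv.Perm (Fin q) =>
      pairingSymm (P := P) p.1 p.2 := by
  rintro ⟨b, π⟩ ⟨b', π'⟩ h
  have h' : ∀ j, π j = π' j ∧ b j = b' j := by
    intro j
    have hj := congrArg (· (Sum.inl (j, false))) h
    simp only [pairingSymm, Equiv.sumCongr_apply, Sum.map_inl, Equiv.prodShear_apply,
      Sum.inl.injEq, Prod.mk.injEq] at hj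
    refine ⟨hj.1, ?_⟩
    cases hb : b j <;> cases hb' : b' j <;> simp [hb, hb'] at hj ⊢
  simp only [Prod.mk.injEq]
  exact ⟨funext fun j => (h' j).2, Equiv.ext fun j => (h' j).1⟩

lemma IsPairing.pairingSymm_trans {σ : V → α} {e : Fin P → α} {ℓ : PairingIndex q P ≃ M}
    (h : IsPairing σ e ℓ) (b : Fin q → Bool) (π : Equiv.Perm (Fin q)) :
    IsPairing σ e ((pairingSymm b π).trans ℓ) := by
  refine ⟨fun j c => ?_, fun r => h.2 r⟩
  simp only [pairingSymm, Equiv.trans_apply, Equiv.sumCongr_apply, Sum.map_inl,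
    Equiv.prodShear_apply]
  exact (h.1 _ _).trans (h.1 _ _).symm

def pairings [DecidableEq V] [DecidableEq α] (q : ℕ) (M : Finset V) (σ : V → α)
    (e : Fin P → α) : Finset (PairingIndex q P ≃ M) :=
  univ.filter (IsPairing σ e)

lemma two_pow_mul_factorial_le_card_pairings [DecidableEq V] [DecidableEq α] {σ : V → α}
    {e : Fin P → α} {ℓ : PairingIndex q P ≃ M} (h : IsPairing σ e ℓ) :
    2 ^ q * q ! ≤ #(pairings q M σ e) := by
  have hcard : #(univ : Finset ((Fin q → Bool) × Equiv.Perm (Fin q))) = 2 ^ q * q ! := by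
    simp [Fintype.card_perm]
  rw [← hcard]
  refine card_le_card_of_injOn (fun p => (pairingSymm p.1 p.2).trans ℓ) ?_ ?_
  · intro p _
    simpa [pairings] using h.pairingSymm_trans p.1 p.2
  · intro p _ p' _ hpp'
    exact pairingSymm_injective (Equiv.ext fun d => ℓ.injective (congrArg (· d) hpp'))

/-- The `true` vertex of each pair is the one left out, so it keeps the pair's colour. -/
def freeIndices (q P : ℕ) : Finset (PairingIndex q P) := (univ ×ˢ {false}).disjSum univ

def freeVertices (ℓ : PairingIndex q P ≃ M) : Finset V :=
  (freeIndices q P).map (ℓ.toEmbedding.trans (Function.Embedding.subtype _))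

lemma freeVertices_subset (ℓ : PairingIndex q P ≃ M) : freeVertices ℓ ⊆ M := by
  intro v hv
  obtain ⟨d, -, rfl⟩ := mem_map.1 hv
  exact (ℓ d).2

lemma card_freeVertices (ℓ : PairingIndex q P ≃ M) : #(freeVertices ℓ) = q + P := by
  simp [freeVertices, freeIndices]

lemma IsPairing.eq_of_eqOn_compl_freeVertices {σ σ' : V → α} {e : Fin P → α}
    {ℓ : PairingIndex q P ≃ M} (hσ : IsPairing σ e ℓ) (hσ' : IsPairing σ' e ℓ)
    (h : ∀ v ∉ freeVertices ℓ, σ v = σ' v) : σ = σ' := by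
  funext v
  by_cases hv : v ∈ freeVertices ℓ
  · obtain ⟨d, -, rfl⟩ := mem_map.1 hv
    rcases d with ⟨j, b⟩ | r
    · have hkept : (ℓ (.inl (j, true)) : V) ∉ freeVertices ℓ := by
        simp [freeVertices, freeIndices]
      simpa [hσ.1, hσ'.1] using h _ hkept
    · simpa using (hσ.2 r).trans (hσ'.2 r).symm
  · exact h v hv

end Pairing

section Counting

variable {V α : Type*} [Fintype V] [DecidableEq V] [Fintype α] [DecidableEq α]

lemma pow_card_le_card_eqOn_compl (Ω : Finset (V → α)) (τ : ℕ) (S : Finset V)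
    (hτ : ∀ σ ∈ Ω, ∀ v ∈ S, τ ≤ #(univ.filter fun x => Function.update σ v x ∈ Ω))
    {σ : V → α} (hσ : σ ∈ Ω) :
    τ ^ #S ≤ #(Ω.filter fun ρ => ∀ v ∉ S, ρ v = σ v) := by
  induction S using Finset.cons_induction generalizing σ with
  | empty => exact card_pos.2 ⟨σ, mem_filter.2 ⟨hσ, fun _ _ => rfl⟩⟩
  | cons v S hv ih =>
    set L := univ.filter fun x => Function.update σ v x ∈ Ω
    let extensions : α → Finset (V → α) := fun x =>
      Ω.filter fun ρ => ∀ u ∉ S, ρ u = Function.update σ v x u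
    have hdisj : (L : Set α).PairwiseDisjoint extensions := by
      intro x _ y _ hxy
      refine disjoint_left.2 fun ρ hx hy => hxy ?_
      have hx := (mem_filter.1 hx).2 v hv
      have hy := (mem_filter.1 hy).2 v hv
      simp only [Function.update_self] at hx hy
      exact hx.symm.trans hy
    have hsub :
        L.biUnion extensions ⊆ Ω.filter fun ρ => ∀ u ∉ cons v S hv, ρ u = σ u := by
      intro ρ hρ
      obtain ⟨x, -, hρx⟩ := mem_biUnion.1 hρ
      refine mem_filter.2 ⟨(mem_filter.1 hρx).1, fun u hu => ?_⟩
      rw [mem_cons, not_or] at hu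
      rw [(mem_filter.1 hρx).2 u hu.2, Function.update_of_ne hu.1]
    calc τ ^ #(cons v S hv) = τ ^ #S * τ := by rw [card_cons, pow_succ]
      _ ≤ τ ^ #S * #L := Nat.mul_le_mul_left _ (hτ σ hσ v (mem_cons_self v S))
      _ = ∑ _x ∈ L, τ ^ #S := by rw [sum_const, smul_eq_mul, mul_comm]
      _ ≤ ∑ x ∈ L, #(extensions x) := sum_le_sum fun x hx =>
          ih (fun ρ hρ u hu => hτ ρ hρ u (mem_cons_of_mem hu)) (mem_filter.1 hx).2
      _ = #(L.biUnion extensions) := (card_biUnion hdisj).symm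
      _ ≤ _ := card_le_card hsub

lemma card_mul_le_card_mul_factorial {Ω B : Finset (V → α)} (hBΩ : B ⊆ Ω) {M : Finset V}
    {τ : ℕ} (hτ : ∀ σ ∈ Ω, ∀ v ∈ M, τ ≤ #(univ.filter fun x => Function.update σ v x ∈ Ω))
    {q P : ℕ} (e : Fin P → α)
    (hB : ∀ σ ∈ B, ∃ ℓ : PairingIndex q P ≃ M, IsPairing σ e ℓ) :
    #B * (2 ^ q * q ! * τ ^ (q + P)) ≤ #Ω * (2 * q + P)! := by
  rcases B.eq_empty_or_nonempty with rfl | ⟨σ₁, hσ₁⟩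
  · simp
  obtain ⟨ℓ₁, -⟩ := hB σ₁ hσ₁
  let s := B.sigma fun σ => pairings q M σ e
  let t := Ω ×ˢ (univ : Finset (PairingIndex q P ≃ M))
  have hs : #B * (2 ^ q * q !) ≤ #s :=
    calc #B * (2 ^ q * q !) = ∑ _σ ∈ B, 2 ^ q * q ! := by rw [sum_const, smul_eq_mul]
      _ ≤ ∑ σ ∈ B, #(pairings q M σ e) := sum_le_sum fun σ hσ =>
          (hB σ hσ).elim fun _ h => two_pow_mul_factorial_le_card_pairings h
      _ = #s := (card_sigma _ _).symm
  have ht : #t = #Ω * (2 * q + P)! := by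
    simp only [t, card_product, card_univ, Fintype.card_equiv ℓ₁, Fintype.card_sum,
      Fintype.card_prod, Fintype.card_fin, Fintype.card_bool, mul_comm q 2]
  -- `(σ, ℓ)` has at least `τ ^ (q + P)` partners `(ρ, ℓ)`, and `(ρ, ℓ)` has at most one.
  have hdouble : #s * τ ^ (q + P) ≤ #t * 1 := by
    refine card_mul_le_card_mul (fun a b => b.2 = a.2 ∧ ∀ v ∉ freeVertices a.2, b.1 v = a.1 v)
      ?_ ?_
    · rintro ⟨σ, ℓ⟩ hσℓ
      obtain ⟨hσ, -⟩ := mem_sigma.1 hσℓ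
      have hτℓ := pow_card_le_card_eqOn_compl Ω τ (freeVertices ℓ)
        (fun ρ hρ v hv => hτ ρ hρ v (freeVertices_subset ℓ hv)) (hBΩ hσ)
      rw [card_freeVertices] at hτℓ
      refine hτℓ.trans (card_le_card_of_injOn (fun ρ => (ρ, ℓ)) ?_ ?_)
      · intro ρ hρ
        rw [mem_coe, mem_filter] at hρ
        simpa [bipartiteAbove, t, hρ.1] using hρ.2
      · intro ρ _ ρ' _ h
        exact congrArg Prod.fst h
    · rintro ⟨ρ, ℓ⟩ -
      refine card_le_one.2 ?_
      rintro ⟨σ, ℓ'⟩ hσ ⟨σ', ℓ''⟩ hσ'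
      simp only [s, bipartiteBelow, pairings, mem_filter, mem_sigma, mem_univ, true_and]
        at hσ hσ'
      obtain ⟨⟨-, hpair⟩, rfl, hagree⟩ := hσ
      obtain ⟨⟨-, hpair'⟩, rfl, hagree'⟩ := hσ'
      rw [hpair.eq_of_eqOn_compl_freeVertices hpair' fun v hv =>
        (hagree v hv).symm.trans (hagree' v hv)]
  calc #B * (2 ^ q * q ! * τ ^ (q + P)) = #B * (2 ^ q * q !) * τ ^ (q + P) := by ring
    _ ≤ #s * τ ^ (q + P) := Nat.mul_le_mul_right _ hs
    _ ≤ #Ω * (2 * q + P)! := by rw [← ht, ← mul_one #t]; exact hdouble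

end Counting

section FactorialBound

open Real

lemma pow_mul_one_add_le_add_one_pow {a : ℝ} (ha : 0 < a) (n : ℕ) :
    a ^ n * (1 + n / a) ≤ (a + 1) ^ n :=
  calc a ^ n * (1 + n / a) = a ^ n * (1 + n * (1 / a)) := by ring
    _ ≤ a ^ n * (1 + 1 / a) ^ n := by
        gcongr
        exact one_add_mul_le_pow (by linarith [one_div_pos.2 ha]) n
    _ = (a + 1) ^ n := by rw [← mul_pow]; field_simp

lemma mul_exp_one_mul_pow_le (q : ℕ) :
    (2 * q + 1) * (2 * q + 2) * exp 1 * (4 * q : ℝ) ^ q ≤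
      2 * (q + 1) * (4 * (q + 1)) ^ (q + 1) := by
  have he := exp_one_lt_three
  rcases Nat.eq_zero_or_pos q with rfl | hq
  · norm_num
    linarith
  have hq' : (1 : ℝ) ≤ q := by exact_mod_cast hq
  have hdouble : 2 * (4 * q : ℝ) ^ q ≤ (4 * (q + 1)) ^ q :=
    calc 2 * (4 * q : ℝ) ^ q = 4 ^ q * ((q : ℝ) ^ q * (1 + q / q)) := by
          rw [div_self (by positivity), mul_pow]; ring
      _ ≤ 4 ^ q * ((q : ℝ) + 1) ^ q := by
          gcongr; exact pow_mul_one_add_le_add_one_pow (by positivity) q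
      _ = (4 * (q + 1)) ^ q := by rw [mul_pow]
  have hcoef : (2 * q + 1) * (2 * q + 2) * exp 1 ≤ 16 * ((q : ℝ) + 1) ^ 2 :=
    calc (2 * q + 1) * (2 * q + 2) * exp 1 ≤ (2 * q + 1) * (2 * q + 2) * 3 := by gcongr
      _ ≤ 16 * ((q : ℝ) + 1) ^ 2 := by nlinarith
  calc (2 * q + 1) * (2 * q + 2) * exp 1 * (4 * q : ℝ) ^ q
      ≤ 16 * ((q : ℝ) + 1) ^ 2 * (4 * q) ^ q := by gcongr
    _ = 8 * (q + 1) ^ 2 * (2 * (4 * q : ℝ) ^ q) := by ring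
    _ ≤ 8 * (q + 1) ^ 2 * (4 * (q + 1)) ^ q := by gcongr
    _ = 2 * (q + 1) * (4 * (q + 1)) ^ (q + 1) := by ring

lemma exp_one_mul_pow_le {m s : ℕ} (hm : 1 ≤ m) (hms : m ≤ 2 * s) :
    exp 1 * (2 * m : ℝ) ^ s ≤ 2 * (2 * m + 2) ^ s := by
  have hm' : (0 : ℝ) < m := by exact_mod_cast hm
  have hsm : (1 : ℝ) / 2 ≤ s / m := by
    rw [div_le_div_iff₀ two_pos hm', one_mul]
    exact_mod_cast (by omega : m ≤ s * 2)
  calc exp 1 * (2 * m : ℝ) ^ s ≤ 3 * (2 * m) ^ s := by gcongr; exact exp_one_lt_three.le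
    _ = 2 * ((2 * m) ^ s * (3 / 2)) := by ring
    _ ≤ 2 * ((2 * m) ^ s * (1 + s / m)) := by gcongr; linarith
    _ = 2 * (2 ^ s * ((m : ℝ) ^ s * (1 + s / m))) := by rw [mul_pow]; ring
    _ ≤ 2 * (2 ^ s * ((m : ℝ) + 1) ^ s) := by
        gcongr; exact pow_mul_one_add_le_add_one_pow hm' s
    _ = 2 * (2 * m + 2) ^ s := by rw [← mul_pow]; ring

lemma factorial_two_mul_mul_exp_pow_le (q : ℕ) :
    ((2 * q)! : ℝ) * exp 1 ^ q ≤ √2 * (2 ^ q * q !) * (4 * q) ^ q := by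
  induction q with
  | zero => simp [one_lt_sqrt_two.le]
  | succ q ih =>
    calc ((2 * (q + 1))! : ℝ) * exp 1 ^ (q + 1)
        = ((2 * q)! * exp 1 ^ q) * ((2 * q + 1) * (2 * q + 2) * exp 1) := by
          rw [show 2 * (q + 1) = 2 * q + 1 + 1 by ring, Nat.factorial_succ, Nat.factorial_succ]
          push_cast; ring
      _ ≤ √2 * (2 ^ q * q !) * (4 * q) ^ q * ((2 * q + 1) * (2 * q + 2) * exp 1) := by gcongr
      _ = √2 * (2 ^ q * q !) * ((2 * q + 1) * (2 * q + 2) * exp 1 * (4 * q) ^ q) := by ring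
      _ ≤ √2 * (2 ^ q * q !) * (2 * (q + 1) * (4 * (q + 1)) ^ (q + 1)) := by
          exact mul_le_mul_of_nonneg_left (mul_exp_one_mul_pow_le q) (by positivity)
      _ = √2 * (2 ^ (q + 1) * (q + 1)!) * (4 * ↑(q + 1)) ^ (q + 1) := by
          push_cast [Nat.factorial_succ]; ring

lemma factorial_mul_exp_pow_le (q P : ℕ) :
    ((2 * q + P)! : ℝ) * exp 1 ^ (q + P) ≤
      √2 * (2 ^ q * q !) * (2 * (2 * q + P : ℕ)) ^ (q + P) := by
  induction P with
  | zero =>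
    simp only [add_zero]
    convert factorial_two_mul_mul_exp_pow_le q using 3
    push_cast; ring
  | succ P ih =>
    rcases Nat.eq_zero_or_pos (2 * q + P) with h0 | hpos
    · obtain ⟨rfl, rfl⟩ : q = 0 ∧ P = 0 := by omega
      norm_num
      nlinarith [exp_one_lt_d9, sq_sqrt (zero_le_two (α := ℝ)), sqrt_nonneg 2]
    set m := 2 * q + P
    set C := √2 * (2 ^ q * q ! : ℝ)
    rw [show 2 * q + (P + 1) = m + 1 by omega, show q + (P + 1) = q + P + 1 by omega]
    calc ((m + 1)! : ℝ) * exp 1 ^ (q + P + 1) = (m + 1) * (m ! * exp 1 ^ (q + P)) * exp 1 := by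
          push_cast [Nat.factorial_succ]; ring
      _ ≤ (m + 1) * (C * (2 * m) ^ (q + P)) * exp 1 := by gcongr
      _ = (m + 1) * C * (exp 1 * (2 * m) ^ (q + P)) := by ring
      _ ≤ (m + 1) * C * (2 * (2 * m + 2) ^ (q + P)) := by
          gcongr ?_ * ?_; exact exp_one_mul_pow_le hpos (by omega)
      _ = C * (2 * (m + 1 : ℕ)) ^ (q + P + 1) := by push_cast; ring

lemma factorial_div_le (q P τ : ℕ) (hτ : 0 < τ) :
    ((2 * q + P)! : ℝ) / (2 ^ q * q ! * τ ^ (q + P)) ≤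
      √2 * (2 * (2 * q + P : ℕ) / (exp 1 * τ)) ^ (q + P) := by
  rw [div_le_iff₀ (by positivity)]
  calc ((2 * q + P)! : ℝ) = (2 * q + P)! * exp 1 ^ (q + P) / exp 1 ^ (q + P) := by field_simp
    _ ≤ √2 * (2 ^ q * q !) * (2 * (2 * q + P : ℕ)) ^ (q + P) / exp 1 ^ (q + P) := by
        exact div_le_div_of_nonneg_right (factorial_mul_exp_pow_le q P) (by positivity)
    _ = √2 * (2 * (2 * q + P : ℕ) / (exp 1 * τ)) ^ (q + P) * (2 ^ q * q ! * τ ^ (q + P)) := by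
        rw [div_pow, mul_pow, mul_pow]; field_simp

end FactorialBound

lemma card_div_card_le_of_isPairing {V α : Type*} [Fintype V] [DecidableEq V] [Fintype α]
    [DecidableEq α] {Ω B : Finset (V → α)} (hBΩ : B ⊆ Ω) {M : Finset V} {τ : ℕ} (hτ : 0 < τ)
    (hτΩ : ∀ σ ∈ Ω, ∀ v ∈ M, τ ≤ #(univ.filter fun x => Function.update σ v x ∈ Ω))
    {q P : ℕ} (e : Fin P → α) (hB : ∀ σ ∈ B, ∃ ℓ : PairingIndex q P ≃ M, IsPairing σ e ℓ) :
    (#B : ℝ) / #Ω ≤ √2 * (2 * (2 * q + P : ℕ) / (Real.exp 1 * τ)) ^ (q + P) := by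
  rcases Ω.eq_empty_or_nonempty with rfl | hΩ
  · simp only [card_empty, Nat.cast_zero, div_zero]
    positivity
  refine le_trans ?_ (factorial_div_le q P τ hτ)
  rw [div_le_div_iff₀ (by exact_mod_cast hΩ.card_pos) (by positivity)]
  exact_mod_cast (card_mul_le_card_mul_factorial hBΩ hτΩ e hB).trans_eq (mul_comm _ _)

lemma le_card_filter_update_mem_filter {V α : Type*} [Fintype V] [DecidableEq V] [Fintype α]
    [DecidableEq α] {𝒞 : Finset (V → α)} {M : Finset V} {τ : ℕ}
    (hL : ∀ σ ∈ 𝒞, ∀ v ∈ M, τ ≤ #(univ.filter fun x => Function.update σ v x ∈ 𝒞))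
    (σ₀ : V → α) :
    ∀ σ ∈ 𝒞.filter (fun ρ => ∀ u ∉ M, ρ u = σ₀ u), ∀ v ∈ M,
      τ ≤ #(univ.filter fun x =>
        Function.update σ v x ∈ 𝒞.filter fun ρ => ∀ u ∉ M, ρ u = σ₀ u) := by
  intro σ hσ v hv
  rw [mem_filter] at hσ
  refine (hL σ hσ.1 v hv).trans_eq (congrArg card (filter_congr fun x _ => ?_))
  simp only [mem_filter, iff_self_and]
  intro _ u hu
  rw [Function.update_of_ne (ne_of_mem_of_not_mem hv hu).symm, hσ.2 u hu]

theorem stmt6_general {V : Type*} [Fintype V] [DecidableEq V]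
    (k τ : ℕ) (hτ : 1 ≤ τ)
    (𝒞 : Finset (V → Fin k))
    (X M : Finset V) (hMX : M ⊆ X) (m : ℕ) (hm : M.card = m)
    (hL : ∀ σ ∈ 𝒞, ∀ v ∈ M,
      τ ≤ (Finset.univ.filter fun x : Fin k => Function.update σ v x ∈ 𝒞).card)
    (σ₀ : V → Fin k) :
    ((𝒞.filter fun σ => (∀ v ∉ M, σ v = σ₀ v) ∧ oddColorsOn X σ = ∅).card : ℝ) /
        ((𝒞.filter fun σ => ∀ v ∉ M, σ v = σ₀ v).card : ℝ) ≤
      Real.sqrt 2 * (2 * (m : ℝ) / (Real.exp 1 * (τ : ℝ))) ^ ((m : ℝ) / 2) := by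
  set Ω := 𝒞.filter fun σ => ∀ v ∉ M, σ v = σ₀ v
  set B := 𝒞.filter fun σ => (∀ v ∉ M, σ v = σ₀ v) ∧ oddColorsOn X σ = ∅
  set x := 2 * (m : ℝ) / (Real.exp 1 * τ)
  have hBΩ : B ⊆ Ω := monotone_filter_right 𝒞 fun _ _ => And.left
  rcases le_or_gt 1 x with hx | hx
  · calc (#B : ℝ) / #Ω ≤ 1 := div_le_one_of_le₀ (by exact_mod_cast card_le_card hBΩ) (by positivity)
      _ ≤ √2 * x ^ ((m : ℝ) / 2) :=
        one_le_mul_of_one_le_of_one_le Real.one_lt_sqrt_two.le (Real.one_le_rpow hx (by positivity))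
  rcases B.eq_empty_or_nonempty with hB | ⟨σ₁, hσ₁⟩
  · rw [hB, card_empty, Nat.cast_zero, zero_div]
    positivity
  have hpair (σ) (hσ : σ ∈ B) := exists_isPairing σ M <|
    oddColorsOn_eq_of_oddColorsOn_eq_empty hMX (mem_filter.1 hσ).2.1 (mem_filter.1 hσ).2.2
  set P := #(oddColorsOn (X \ M) σ₀)
  set q := (#M - P) / 2
  obtain ⟨ℓ₁, -⟩ := hpair σ₁ hσ₁
  have hqP : 2 * q + P = m := by
    have := card_eq_two_mul_add ℓ₁
    omega
  calc (#B : ℝ) / #Ω ≤ √2 * (2 * (2 * q + P : ℕ) / (Real.exp 1 * τ)) ^ (q + P) :=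
        card_div_card_le_of_isPairing hBΩ hτ (le_card_filter_update_mem_filter hL σ₀) _ hpair
    _ ≤ √2 * x ^ ((m : ℝ) / 2) := by
        rw [hqP, ← Real.rpow_natCast]
        refine mul_le_mul_of_nonneg_left ?_ (Real.sqrt_nonneg 2)
        refine Real.rpow_le_rpow_of_exponent_ge' (by positivity) hx.le (by positivity) ?_
        rw [← hqP]
        push_cast
        linarith

theorem stmt6 {V : Type*} [Fintype V] [DecidableEq V] (G : SimpleGraph V)
    (k τ : ℕ) (hk : 0 < k) (hτ : 1 ≤ τ)
    (𝒞 : Finset (V → Fin k)) (h𝒞 : 𝒞.Nonempty)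
    (X M : Finset V) (hMX : M ⊆ X) (m : ℕ) (hm : M.card = m)
    (hL : ∀ σ ∈ 𝒞, ∀ v ∈ M,
      τ ≤ (Finset.univ.filter fun x : Fin k => Function.update σ v x ∈ 𝒞).card)
    (σ₀ : V → Fin k) (hσ₀ : ∃ σ ∈ 𝒞, ∀ v ∉ M, σ v = σ₀ v) :
    ((𝒞.filter fun σ => (∀ v ∉ M, σ v = σ₀ v) ∧ oddColorsOn X σ = ∅).card : ℝ) /
        ((𝒞.filter fun σ => ∀ v ∉ M, σ v = σ₀ v).card : ℝ) ≤
      Real.sqrt 2 * (2 * (m : ℝ) / (Real.exp 1 * (τ : ℝ))) ^ ((m : ℝ) / 2) :=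
  stmt6_general k τ hτ 𝒞 X M hMX m hm hL σ₀
end

section
/- For every integer k₀ ≥ 2 and every real number N, there exists a finite simple graph G with chromatic number χ(G) = k₀, maximum degree Δ(G) ≥ N, minimum degree δ(G) ≥ log₄ Δ(G), and odd chromatic number χ_o(G) > χ(G) · log₄ Δ(G), where log₄ denotes the logarithm to base 4. -/
/-!
Take the complete `k₀`-partite graph with parts of size `2t` and, for every part `P` and every
`S ⊆ P` with `t ≤ |S|`, add a new vertex adjacent exactly to `S`. This graph is still
`k₀`-chromatic and its degrees lie between `t` and `4 ^ t`. In an odd colouring, however, each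
part needs more than `t` colours: otherwise discarding one vertex of each odd colour class of
`P` leaves a set `S` with `t ≤ |S|` on which every colour is even, and the vertex attached to
`S` sees no odd colour. The parts see pairwise disjoint sets of colours, so
`χ_o ≥ k₀ (t + 1) > χ · log₄ Δ`.
-/

open Finset

attribute [local instance] Classical.propDecidable

section OddColors

variable {V : Type*} {k : ℕ}

lemma oddColorsOn_subset_image (X : Finset V) (σ : V → Fin k) :
    oddColorsOn X σ ⊆ X.image σ := by
  intro c hc
  obtain ⟨v, hv⟩ := card_pos.1 (mem_filter.1 hc).2.pos
  exact mem_image.2 ⟨v, (mem_filter.1 hv).1, (mem_filter.1 hv).2⟩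

lemma oddColorsOn_map {W : Type*} (X : Finset V) (f : V ↪ W) (σ : W → Fin k) :
    oddColorsOn (X.map f) σ = oddColorsOn X (σ ∘ f) := by
  simp only [oddColorsOn, filter_map, card_map, Function.comp_def]

lemma oddColorsOn_erase {X : Finset V} {v : V} {σ : V → Fin k} (hv : v ∈ X)
    (hodd : σ v ∈ oddColorsOn X σ) :
    oddColorsOn (X.erase v) σ = (oddColorsOn X σ).erase (σ v) := by
  ext c
  simp only [oddColorsOn, mem_filter, mem_univ, true_and, mem_erase, filter_erase] at hodd ⊢
  by_cases hc : c = σ v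
  · subst hc
    rw [card_erase_of_mem (mem_filter.2 ⟨hv, rfl⟩ : v ∈ X.filter (σ · = σ v))]
    have := hodd.pos
    simp only [ne_eq, not_true_eq_false, false_and, iff_false, Nat.odd_iff] at hodd ⊢
    omega
  · rw [erase_eq_of_notMem fun h => hc (mem_filter.1 h).2.symm]
    exact ⟨fun h => ⟨hc, h⟩, And.right⟩

lemma exists_subset_oddColorsOn_eq_empty (X : Finset V) (σ : V → Fin k) :
    ∃ S ⊆ X, oddColorsOn S σ = ∅ ∧ #X ≤ #S + #(oddColorsOn X σ) := by
  induction h : #(oddColorsOn X σ) generalizing X with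
  | zero => exact ⟨X, subset_rfl, card_eq_zero.1 h, le_add_right le_rfl⟩
  | succ n ih =>
    obtain ⟨c, hc⟩ := card_pos.1 (by omega : 0 < #(oddColorsOn X σ))
    obtain ⟨v, hv⟩ := card_pos.1 (mem_filter.1 hc).2.pos
    obtain ⟨hvX, rfl⟩ := mem_filter.1 hv
    have herase := oddColorsOn_erase hvX hc
    obtain ⟨S, hSX, hS, hcard⟩ :=
      ih (X.erase v) (by rw [herase, card_erase_of_mem hc, h, Nat.add_sub_cancel])
    refine ⟨S, hSX.trans (erase_subset v X), hS, ?_⟩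
    have := card_erase_add_one hvX
    omega

end OddColors

section Invariance

variable {V W : Type*} {G : SimpleGraph V} {H : SimpleGraph W}

lemma chrom_congr (e : G ≃g H) : chrom G = chrom H := by
  simp only [chrom, SimpleGraph.colorable_congr e]

lemma chrom_eq_of_colorable {n : ℕ} (h : G.Colorable n)
    (hmin : ∀ m, G.Colorable m → n ≤ m) : chrom G = n :=
  le_antisymm (Nat.sInf_le h) (le_csInf ⟨n, h⟩ hmin)

variable [Fintype V] [Fintype W] [DecidableRel G.Adj] [DecidableRel H.Adj]

lemma SimpleGraph.Iso.neighborFinset_apply (e : G ≃g H) (v : V) :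
    H.neighborFinset (e v) = (G.neighborFinset v).map e.toEquiv.toEmbedding := by
  ext w
  obtain ⟨u, rfl⟩ := e.surjective w
  rw [mem_map_equiv, mem_neighborFinset, mem_neighborFinset, e.map_adj_iff]
  exact Iff.of_eq (congrArg _ (e.toEquiv.symm_apply_apply u).symm)

lemma IsOddColoring.comp_iso {k : ℕ} {σ : W → Fin k} (e : G ≃g H)
    (hσ : IsOddColoring H σ) : IsOddColoring G (σ ∘ e) := by
  refine ⟨fun u v huv => hσ.1 _ _ (e.map_adj_iff.2 huv), fun v hv => ?_⟩
  have := hσ.2 (e v) (by rw [e.neighborFinset_apply]; exact hv.map)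
  rwa [e.neighborFinset_apply, oddColorsOn_map] at this

lemma oddChromNum_congr (e : G ≃g H) : oddChromNum G = oddChromNum H := by
  unfold oddChromNum
  congr 1
  ext k
  constructor
  · rintro ⟨σ, hσ⟩
    exact ⟨σ ∘ e.symm, hσ.comp_iso e.symm⟩
  · rintro ⟨σ, hσ⟩
    exact ⟨σ ∘ e, hσ.comp_iso e⟩

lemma isOddColoring_equivFin (G : SimpleGraph V) [DecidableRel G.Adj] :
    IsOddColoring G (Fintype.equivFin V) := by
  refine ⟨fun u v huv h => G.ne_of_adj huv ((Fintype.equivFin V).injective h), ?_⟩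
  rintro v ⟨u, hu⟩
  refine ⟨Fintype.equivFin V u, mem_filter.2 ⟨mem_univ _, ?_⟩⟩
  convert odd_one
  refine card_eq_one.2 ⟨u, ?_⟩
  ext w
  simpa [(Fintype.equivFin V).injective.eq_iff] using fun h => h ▸ (G.mem_neighborFinset ..).1 hu

lemma le_oddChromNum_of_forall_isOddColoring {b : ℕ}
    (h : ∀ k (σ : V → Fin k), IsOddColoring G σ → b ≤ k) :
    b ≤ oddChromNum G :=
  le_csInf ⟨_, _, isOddColoring_equivFin G⟩ fun k ⟨σ, hσ⟩ => h k σ hσ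

end Invariance

lemma card_filter_mem_le_two_pow {α : Type*} [Fintype α] [DecidableEq α] (a : α) :
    #{T : Finset α | a ∈ T} ≤ 2 ^ (Fintype.card α - 1) :=
  calc #{T : Finset α | a ∈ T}
      ≤ #(univ.erase a).powerset := by
        refine card_le_card_of_injOn (·.erase a) (fun T _ => ?_) fun T hT U hU h => ?_
        · exact mem_powerset.2 (erase_subset_erase a (subset_univ T))
        · rw [← insert_erase (mem_filter.1 hT).2, ← insert_erase (mem_filter.1 hU).2]
          exact congrArg _ h
    _ = 2 ^ (Fintype.card α - 1) := by
        rw [card_powerset, card_erase_of_mem (mem_univ a), card_univ]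

/-- `inl (i, x)` is vertex `x` of part `i`; `inr (i, S)` is the hub attached to `S ⊆ Fin m`
in part `i`. -/
abbrev HubVertex (k m t : ℕ) := (Fin k × Fin m) ⊕ (Fin k × {S : Finset (Fin m) // t ≤ #S})

def hubGraph (k m t : ℕ) : SimpleGraph (HubVertex k m t) where
  Adj
    | .inl (i, _), .inl (j, _) => i ≠ j
    | .inl (i, x), .inr (j, S) | .inr (j, S), .inl (i, x) => i = j ∧ x ∈ S.1
    | .inr _, .inr _ => False
  symm := ⟨by
    rintro (⟨i, x⟩ | ⟨i, S⟩) (⟨j, y⟩ | ⟨j, T⟩) h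
    exacts [Ne.symm h, h, h, h]⟩
  loopless := ⟨by
    rintro (⟨i, x⟩ | ⟨i, S⟩) h
    exacts [h rfl, h]⟩

namespace hubGraph

variable {k m t : ℕ}

@[simp] lemma adj_inl_inl {i j : Fin k} {x y : Fin m} :
    (hubGraph k m t).Adj (.inl (i, x)) (.inl (j, y)) ↔ i ≠ j := Iff.rfl

@[simp] lemma adj_inl_inr {i j : Fin k} {x : Fin m} {S : {S : Finset (Fin m) // t ≤ #S}} :
    (hubGraph k m t).Adj (.inl (i, x)) (.inr (j, S)) ↔ i = j ∧ x ∈ S.1 := Iff.rfl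

@[simp] lemma adj_inr_inl {i j : Fin k} {x : Fin m} {S : {S : Finset (Fin m) // t ≤ #S}} :
    (hubGraph k m t).Adj (.inr (j, S)) (.inl (i, x)) ↔ i = j ∧ x ∈ S.1 := Iff.rfl

@[simp] lemma not_adj_inr_inr {i j : Fin k} {S T : {S : Finset (Fin m) // t ≤ #S}} :
    ¬ (hubGraph k m t).Adj (.inr (i, S)) (.inr (j, T)) := id

def partEmbedding (t : ℕ) (i : Fin k) : Fin m ↪ HubVertex k m t :=
  ⟨fun x => .inl (i, x), fun x y h => by simpa using h⟩

@[simp] lemma partEmbedding_apply (i : Fin k) (x : Fin m) :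
    partEmbedding t i x = .inl (i, x) := rfl

lemma neighborFinset_inr (i : Fin k) (S : {S : Finset (Fin m) // t ≤ #S}) :
    (hubGraph k m t).neighborFinset (.inr (i, S)) = S.1.map (partEmbedding t i) := by
  ext (⟨j, y⟩ | ⟨j, T⟩) <;> simp [eq_comm, and_comm]

lemma degree_inr (i : Fin k) (S : {S : Finset (Fin m) // t ≤ #S}) :
    (hubGraph k m t).degree (.inr (i, S)) = #S.1 := by
  rw [← SimpleGraph.card_neighborFinset_eq_degree, neighborFinset_inr, card_map]

lemma le_degree_inl (hk : 2 ≤ k) (i : Fin k) (x : Fin m) :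
    m ≤ (hubGraph k m t).degree (.inl (i, x)) := by
  have : Nontrivial (Fin k) := Fin.nontrivial_iff_two_le.2 hk
  obtain ⟨j, hj⟩ := exists_ne i
  calc m = #(univ.map (partEmbedding (m := m) t j)) := by simp
    _ ≤ (hubGraph k m t).degree (.inl (i, x)) := by
      rw [← SimpleGraph.card_neighborFinset_eq_degree]
      refine card_le_card fun v hv => ?_
      obtain ⟨y, -, rfl⟩ := mem_map.1 hv
      simpa using hj.symm

lemma degree_inl_le (i : Fin k) (x : Fin m) :
    (hubGraph k m t).degree (.inl (i, x)) ≤ k * m + 2 ^ (m - 1) := by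
  let hubs : Finset {S : Finset (Fin m) // t ≤ #S} := {S | x ∈ S.1}
  have hsub : (hubGraph k m t).neighborFinset (.inl (i, x)) ⊆
      univ.map .inl ∪ hubs.map ((Function.Embedding.sectR i _).trans .inr) := by
    rintro (⟨j, y⟩ | ⟨j, S⟩) hv
    · simp
    · obtain ⟨rfl, hx⟩ := (SimpleGraph.mem_neighborFinset ..).1 hv
      simp [hubs, hx]
  have hhubs : #hubs ≤ 2 ^ (m - 1) :=
    calc #hubs ≤ #{T : Finset (Fin m) | x ∈ T} :=
          card_le_card_of_injOn Subtype.val (fun S hS => by simpa [hubs] using hS)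
            Subtype.val_injective.injOn
      _ ≤ 2 ^ (m - 1) := by simpa using card_filter_mem_le_two_pow x
  calc (hubGraph k m t).degree (.inl (i, x)) ≤ #(univ.map .inl) + #(hubs.map _) := by
        rw [← SimpleGraph.card_neighborFinset_eq_degree]
        exact (card_le_card hsub).trans (card_union_le _ _)
    _ ≤ k * m + 2 ^ (m - 1) := by simpa using hhubs

lemma colorable (hk : 2 ≤ k) : (hubGraph k m t).Colorable k := by
  have : Nontrivial (Fin k) := Fin.nontrivial_iff_two_le.2 hk
  choose other hother using fun i : Fin k => exists_ne i
  refine ⟨.mk (Sum.elim Prod.fst (other ∘ Prod.fst)) ?_⟩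
  rintro (⟨i, x⟩ | ⟨i, S⟩) (⟨j, y⟩ | ⟨j, T⟩) h
  · exact h
  · obtain ⟨rfl, -⟩ := h
    exact (hother _).symm
  · obtain ⟨rfl, -⟩ := h
    exact hother _
  · exact absurd h not_adj_inr_inr

lemma chrom_eq (hk : 2 ≤ k) (hm : 0 < m) : chrom (hubGraph k m t) = k :=
  chrom_eq_of_colorable (colorable hk) fun _ hc => by
    simpa using hc.card_le_of_pairwise_adj (fun i : Fin k => .inl (i, ⟨0, hm⟩)) fun _ _ => id

lemma le_degree (hk : 2 ≤ k) (htm : t ≤ m) (v : HubVertex k m t) :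
    t ≤ (hubGraph k m t).degree v := by
  rcases v with ⟨i, x⟩ | ⟨i, S⟩
  · exact htm.trans (le_degree_inl hk i x)
  · exact (degree_inr i S).symm ▸ S.2

lemma maxDegree_le : (hubGraph k m t).maxDegree ≤ k * m + 2 ^ (m - 1) := by
  refine SimpleGraph.maxDegree_le_of_forall_degree_le _ _ ?_
  rintro (⟨i, x⟩ | ⟨i, S⟩)
  · exact degree_inl_le i x
  · rw [degree_inr]
    have : m - 1 < 2 ^ (m - 1) := Nat.lt_two_pow_self
    calc #S.1 ≤ m := card_le_univ _ |>.trans_eq (Fintype.card_fin m)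
      _ ≤ k * m + 2 ^ (m - 1) := by omega

lemma lt_card_image_of_isOddColoring (ht : 0 < t) {c : ℕ} {σ : HubVertex k m t → Fin c}
    (hσ : IsOddColoring (hubGraph k m t) σ) (i : Fin k) :
    m < t + #(univ.image (σ ∘ partEmbedding t i)) := by
  by_contra! hcolours
  obtain ⟨S, -, hS, hcard⟩ := exists_subset_oddColorsOn_eq_empty univ (σ ∘ partEmbedding t i)
  have hodd_le := card_le_card (oddColorsOn_subset_image univ (σ ∘ partEmbedding t i))
  rw [card_univ, Fintype.card_fin] at hcard
  have hS_large : t ≤ #S := by omega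
  obtain ⟨c, hc⟩ := hσ.2 (.inr (i, ⟨S, hS_large⟩)) <| by
    rw [neighborFinset_inr]
    exact (card_pos.1 (ht.trans_le hS_large)).map
  rw [neighborFinset_inr, oddColorsOn_map, hS] at hc
  exact notMem_empty c hc

lemma disjoint_image_of_isOddColoring {c : ℕ} {σ : HubVertex k m t → Fin c}
    (hσ : IsOddColoring (hubGraph k m t) σ) {i j : Fin k} (hij : i ≠ j) :
    Disjoint (univ.image (σ ∘ partEmbedding t i)) (univ.image (σ ∘ partEmbedding t j)) := by
  simp only [disjoint_left, mem_image, mem_univ, true_and, Function.comp_apply,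
    partEmbedding_apply, not_exists]
  rintro _ ⟨x, rfl⟩ y hxy
  exact hσ.1 (.inl (i, x)) (.inl (j, y)) hij hxy.symm

lemma le_oddChromNum (ht : 0 < t) : k * (m + 1 - t) ≤ oddChromNum (hubGraph k m t) :=
  le_oddChromNum_of_forall_isOddColoring fun c σ hσ =>
    calc k * (m + 1 - t) = ∑ _i : Fin k, (m + 1 - t) := by simp
      _ ≤ ∑ i, #(univ.image (σ ∘ partEmbedding t i)) :=
          sum_le_sum fun i _ => by have := lt_card_image_of_isOddColoring ht hσ i; omega
      _ = #(univ.biUnion fun i => univ.image (σ ∘ partEmbedding t i)) :=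
          (card_biUnion fun i _ j _ hij => disjoint_image_of_isOddColoring hσ hij).symm
      _ ≤ c := card_le_univ _ |>.trans_eq (Fintype.card_fin c)

end hubGraph

lemma two_mul_le_two_pow (t : ℕ) : 2 * t ≤ 2 ^ t := by
  rcases t with _ | t
  · simp
  · have : t < 2 ^ t := Nat.lt_two_pow_self
    rw [pow_succ]
    omega

lemma mul_two_mul_add_two_pow_le_four_pow {k t : ℕ} (hkt : k ≤ t) :
    k * (2 * t) + 2 ^ (2 * t - 1) ≤ 4 ^ t := by
  obtain rfl | ht := t.eq_zero_or_pos
  · simp_all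
  have hsq : 2 * t * (2 * t) ≤ 4 ^ t :=
    (Nat.mul_le_mul (two_mul_le_two_pow t) (two_mul_le_two_pow t)).trans_eq
      (by rw [← mul_pow]; norm_num)
  have hhalf : 4 ^ t = 2 * 2 ^ (2 * t - 1) := by
    rw [← pow_succ', Nat.sub_add_cancel (by omega), pow_mul]; norm_num
  have : k * (2 * t) ≤ t * (2 * t) := Nat.mul_le_mul_right _ hkt
  nlinarith

lemma log_div_log_four_le {n t : ℕ} (h : n ≤ 4 ^ t) : Real.log n / Real.log 4 ≤ t := by
  obtain rfl | hn := n.eq_zero_or_pos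
  · simp
  rw [Real.log_div_log, Real.logb_le_iff_le_rpow (by norm_num) (by positivity),
    Real.rpow_natCast]
  exact_mod_cast h

theorem stmt14 (k₀ : ℕ) (hk₀ : 2 ≤ k₀) (N : ℝ) :
    ∃ (n : ℕ) (_ : 0 < n) (G : SimpleGraph (Fin n)),
      chrom G = k₀ ∧
      N ≤ (G.maxDegree : ℝ) ∧
      Real.log G.maxDegree / Real.log 4 ≤ (G.minDegree : ℝ) ∧
      (chrom G : ℝ) * (Real.log G.maxDegree / Real.log 4) < (oddChromNum G : ℝ) := by
  set t := max k₀ ⌈N⌉₊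
  have hk₀t : k₀ ≤ t := le_max_left _ _
  let H := hubGraph k₀ (2 * t) t
  have : Nonempty (HubVertex k₀ (2 * t) t) := ⟨.inl (⟨0, by omega⟩, ⟨0, by omega⟩)⟩
  let e := H.overFinIso rfl
  refine ⟨_, Fintype.card_pos, H.overFin rfl, ?_⟩
  rw [← chrom_congr e, ← e.maxDegree_eq, ← e.minDegree_eq, ← oddChromNum_congr e,
    hubGraph.chrom_eq hk₀ (by omega)]
  have hΔ : H.maxDegree ≤ 4 ^ t :=
    hubGraph.maxDegree_le.trans (mul_two_mul_add_two_pow_le_four_pow hk₀t)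
  have hlog : Real.log H.maxDegree / Real.log 4 ≤ t := log_div_log_four_le hΔ
  have hδ : t ≤ H.minDegree :=
    H.le_minDegree_of_forall_le_degree _ (hubGraph.le_degree hk₀ (by omega))
  have hχo : k₀ * (t + 1) ≤ oddChromNum H := by
    convert hubGraph.le_oddChromNum (k := k₀) (m := 2 * t) (t := t) (by omega) using 2
    omega
  refine ⟨rfl, ?_, hlog.trans (by exact_mod_cast hδ), ?_⟩
  · calc N ≤ t := (Nat.le_ceil N).trans (by exact_mod_cast le_max_right k₀ _)
      _ ≤ 2 * t := by linarith
      _ ≤ H.maxDegree := by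
        exact_mod_cast (hubGraph.le_degree_inl hk₀ ⟨0, by omega⟩ ⟨0, by omega⟩).trans
          (H.degree_le_maxDegree _)
  · calc (k₀ : ℝ) * (Real.log H.maxDegree / Real.log 4) ≤ k₀ * t := by gcongr
      _ < k₀ * (t + 1) := by gcongr; linarith
      _ ≤ oddChromNum H := by exact_mod_cast hχo
end
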